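/- arXiv:1809.03215 — 2 statements merged into one kernel-verified Lean document; each statement's English description precedes it below -/
import Mathlib

section
/- Let q_i > 0 (i = 1,…,F), τ1 > 0, τ2 > 0, Ψ_i ∈ (0, 1], C > 0 with Σ_i Ψ_i > C. Define for ν > 0: p_i°(ν) = (1/τ1)·√(τ2/ν)·√q_i − τ2/τ1, and p_i*(ν) = min{Ψ_i, max{0, p_i°(ν)}}. Suppose ν* > 0 satisfies Σ_i p_i*(ν*) = C. Then p* = (p_1*(ν*), …, p_F*(ν*)) maximizes Σ_i q_i·p_i/(τ1·p_i + τ2) subject to Σ_i p_i ≤ C and 0 ≤ p_i ≤ Ψ_i for all i. -/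
/-! Lagrangian weak duality. With ν = ν*, each summand f(x) = q x / (τ1 x + τ2) lies below its
"supporting line" at p*_i on [0, Ψ_i]: f(b) ≤ f(p*_i) + ν (b - p*_i), because p*_i maximizes the
concave function f(x) - ν x on [0, Ψ_i], being its stationary point p°_i (where
(τ1 p°_i + τ2)² = q_i τ2 / ν) clipped to the interval. Summing these bounds and using
Σ p_i ≤ C = Σ p*_i gives the claim. -/

open Finset Set

theorem sum_le_sum_of_common_supergradient {ι : Type*} (s : Finset ι) (f : ι → ℝ → ℝ)
    (a p : ι → ℝ) {ν : ℝ} (hν : 0 ≤ ν) (hp : ∑ i ∈ s, p i ≤ ∑ i ∈ s, a i)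
    (hf : ∀ i ∈ s, f i (p i) ≤ f i (a i) + ν * (p i - a i)) :
    ∑ i ∈ s, f i (p i) ≤ ∑ i ∈ s, f i (a i) :=
  calc ∑ i ∈ s, f i (p i)
      ≤ ∑ i ∈ s, (f i (a i) + ν * (p i - a i)) := sum_le_sum hf
    _ = ∑ i ∈ s, f i (a i) + ν * (∑ i ∈ s, p i - ∑ i ∈ s, a i) := by
        rw [sum_add_distrib, ← mul_sum, sum_sub_distrib]
    _ ≤ ∑ i ∈ s, f i (a i) :=
        add_le_of_nonpos_right (mul_nonpos_of_nonneg_of_nonpos hν (sub_nonpos.mpr hp))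

theorem sub_mul_sq_sub_mul_nonpos_of_eq_min_max {L U s u v : ℝ} (hL : 0 ≤ L) (hs : 0 ≤ s)
    (hv : v ∈ Icc L U) (hu : u = min U (max L s)) : (v - u) * (s ^ 2 - u * v) ≤ 0 := by
  obtain ⟨hLv, hvU⟩ := hv
  rcases le_total s L with hsL | hLs
  · have hu : u = L := by rw [hu, max_eq_left hsL, min_eq_right (hLv.trans hvU)]
    subst hu
    exact mul_nonpos_of_nonneg_of_nonpos (by linarith) (by nlinarith)
  rcases le_total s U with hsU | hUs
  · have hu : u = s := by rw [hu, max_eq_right hLs, min_eq_right hsU]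
    subst hu
    nlinarith [sq_nonneg (v - u)]
  · have hu : u = U := by rw [hu, max_eq_right hLs, min_eq_left hUs]
    subst hu
    exact mul_nonpos_of_nonpos_of_nonneg (by linarith) (by nlinarith)

theorem mul_min_max_add_of_pos {τ1 : ℝ} (hτ1 : 0 < τ1) (τ2 Ψ x : ℝ) :
    τ1 * min Ψ (max 0 x) + τ2 = min (τ1 * Ψ + τ2) (max τ2 (τ1 * x + τ2)) := by
  have hmono : Monotone fun y => τ1 * y + τ2 := fun y z h => by dsimp; nlinarith
  have := (hmono.map_min (a := Ψ) (b := max 0 x)).trans (by rw [hmono.map_max])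
  simpa using this

theorem div_affine_le_add_mul_sub {q τ1 τ2 ν Ψ s a b : ℝ} (hτ1 : 0 < τ1) (hτ2 : 0 < τ2)
    (hν : 0 < ν) (hs0 : 0 ≤ s) (hs : ν * s ^ 2 = q * τ2) (hb : b ∈ Icc 0 Ψ)
    (ha : a = min Ψ (max 0 ((s - τ2) / τ1))) :
    q * b / (τ1 * b + τ2) ≤ q * a / (τ1 * a + τ2) + ν * (b - a) := by
  set u := τ1 * a + τ2 with hu_def
  set v := τ1 * b + τ2 with hv_def
  have hu : u = min (τ1 * Ψ + τ2) (max τ2 s) := by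
    rw [hu_def, ha, mul_min_max_add_of_pos hτ1, mul_div_cancel₀ _ hτ1.ne', sub_add_cancel]
  have hv : v ∈ Icc τ2 (τ1 * Ψ + τ2) := by
    constructor <;> nlinarith [hb.1, hb.2]
  have hcore := sub_mul_sq_sub_mul_nonpos_of_eq_min_max hτ2.le hs0 hv hu
  have hu_pos : 0 < u := hτ2.trans_le (hu ▸ le_min (hv.1.trans hv.2) (le_max_left _ _))
  have hv_pos : 0 < v := hτ2.trans_le hv.1
  -- f(b) - f(a) = q τ2 (b - a) / (u v), and q τ2 = ν s², b - a = (v - u) / τ1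
  have hgap : q * b / v - q * a / u - ν * (b - a)
      = ν * ((v - u) * (s ^ 2 - u * v)) / (τ1 * u * v) := by
    field_simp
    rw [hu_def, hv_def]
    linear_combination (-τ1 * (b - a)) * hs
  have : ν * ((v - u) * (s ^ 2 - u * v)) / (τ1 * u * v) ≤ 0 :=
    div_nonpos_of_nonpos_of_nonneg (mul_nonpos_of_nonneg_of_nonpos hν.le hcore) (by positivity)
  linarith

theorem optimal_content_placement_general (F : ℕ) (q Ψ : Fin F → ℝ) (τ1 τ2 C νs : ℝ)
    (pstar : Fin F → ℝ)
    (hq : ∀ i, 0 < q i) (hτ1 : 0 < τ1) (hτ2 : 0 < τ2)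
    (hνs : 0 < νs)
    (hpstar : ∀ i, pstar i
        = min (Ψ i) (max 0 ((1 / τ1) * Real.sqrt (τ2 / νs) * Real.sqrt (q i) - τ2 / τ1)))
    (hfull : ∑ i, pstar i = C) :
    ∀ p : Fin F → ℝ, (∀ i, 0 ≤ p i ∧ p i ≤ Ψ i) → (∑ i, p i ≤ C) →
      ∑ i, q i * p i / (τ1 * p i + τ2) ≤ ∑ i, q i * pstar i / (τ1 * pstar i + τ2) := by
  intro p hp hpC
  have hs_sq (i : Fin F) : νs * (√(τ2 / νs) * √(q i)) ^ 2 = q i * τ2 := by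
    rw [mul_pow, Real.sq_sqrt (by positivity), Real.sq_sqrt (hq i).le]
    field_simp
  have hpstar_clip (i : Fin F) :
      pstar i = min (Ψ i) (max 0 ((√(τ2 / νs) * √(q i) - τ2) / τ1)) := by
    rw [hpstar i]; ring_nf
  refine sum_le_sum_of_common_supergradient univ (fun i x => q i * x / (τ1 * x + τ2)) pstar p
    hνs.le (hfull ▸ hpC) fun i _ => ?_
  exact div_affine_le_add_mul_sub hτ1 hτ2 hνs (by positivity) (hs_sq i) (hp i) (hpstar_clip i)

theorem optimal_content_placement (F : ℕ) (q Ψ : Fin F → ℝ) (τ1 τ2 C νs : ℝ)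
    (pstar : Fin F → ℝ)
    (hq : ∀ i, 0 < q i) (hτ1 : 0 < τ1) (hτ2 : 0 < τ2)
    (hΨ : ∀ i, Ψ i ∈ Set.Ioc (0 : ℝ) 1) (hC : 0 < C)
    (hsum : C < ∑ i, Ψ i) (hνs : 0 < νs)
    (hpstar : ∀ i, pstar i
        = min (Ψ i) (max 0 ((1 / τ1) * Real.sqrt (τ2 / νs) * Real.sqrt (q i) - τ2 / τ1)))
    (hfull : ∑ i, pstar i = C) :
    ∀ p : Fin F → ℝ, (∀ i, 0 ≤ p i ∧ p i ≤ Ψ i) → (∑ i, p i ≤ C) →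
      ∑ i, q i * p i / (τ1 * p i + τ2) ≤ ∑ i, q i * pstar i / (τ1 * pstar i + τ2) :=
  optimal_content_placement_general F q Ψ τ1 τ2 C νs pstar hq hτ1 hτ2 hνs hpstar hfull
end

section
/- Fix q_1 ≥ q_2 ≥ … ≥ q_F > 0, τ1 > 0, τ2 > 0, and caps Ψ_i ∈ (0,1]. If Ψ is constant (Ψ_i = Ψ for all i), then any optimal solution p* of maximizing Σ_i q_i·p_i/(τ1 p_i + τ2) subject to Σ_i p_i ≤ C, 0 ≤ p_i ≤ Ψ_i, satisfies p_1* ≥ p_2* ≥ … ≥ p_F*. -/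
/-!
Exchange argument. The per-file utility `g x = x / (τ1 x + τ2)` is increasing and strictly concave
on `[0, ∞)`. If a more popular file `i` had `p i < p j` for a less popular file `j` with the same
cap, replacing both entries by their average keeps the solution feasible and the total unchanged,
while `q i g(a) + q j g(b) < (q i + q j) g((a + b)/2)` strictly raises the objective.
-/

open Function Set

theorem Fintype.sum_update_eq_add_sub {ι M : Type*} [Fintype ι] [DecidableEq ι] [AddCommGroup M]
    (f : ι → M) (i : ι) (b : M) : ∑ k, update f i b k = ∑ k, f k + (b - f i) := by
  rw [Finset.sum_update_of_mem (Finset.mem_univ i),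
    Finset.sum_eq_add_sum_sdiff_singleton_of_mem (Finset.mem_univ i) f]
  abel

theorem Fintype.sum_apply_update_update {ι α M : Type*} [Fintype ι] [DecidableEq ι]
    [AddCommGroup M] (h : ι → α → M) (f : ι → α) {i j : ι} (hij : i ≠ j) (x y : α) :
    ∑ k, h k (update (update f i x) j y k) =
      ∑ k, h k (f k) + (h i x - h i (f i)) + (h j y - h j (f j)) := by
  simp only [apply_update (f := h), Fintype.sum_update_eq_add_sub, update_of_ne hij.symm]

theorem strictConcaveOn_div_linear {τ1 τ2 : ℝ} (hτ1 : 0 < τ1) (hτ2 : 0 < τ2) :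
    StrictConcaveOn ℝ (Ici 0) fun x => x / (τ1 * x + τ2) := by
  refine ⟨convex_Ici 0, fun x hx y hy hxy a b ha hb hab => ?_⟩
  have hx' : 0 < τ1 * x + τ2 := by have := mem_Ici.1 hx; positivity
  have hy' : 0 < τ1 * y + τ2 := by have := mem_Ici.1 hy; positivity
  have hxy' : 0 < (x - y) ^ 2 := by have := sub_ne_zero.2 hxy; positivity
  have hm : 0 < τ1 * (a * x + b * y) + τ2 := by
    have := mem_Ici.1 hx; have := mem_Ici.1 hy; positivity
  obtain rfl : b = 1 - a := by linarith
  simp only [smul_eq_mul]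
  rw [mul_div_assoc', mul_div_assoc', div_add_div _ _ hx'.ne' hy'.ne',
    div_lt_div_iff₀ (by positivity) hm]
  nlinarith [mul_pos (mul_pos ha hb) (mul_pos (mul_pos hτ1 hτ2) hxy')]

theorem monotoneOn_div_linear {τ1 τ2 : ℝ} (hτ1 : 0 ≤ τ1) (hτ2 : 0 < τ2) :
    MonotoneOn (fun x => x / (τ1 * x + τ2)) (Ici 0) := by
  intro x hx y hy hxy
  have hx' : 0 < τ1 * x + τ2 := by have := mem_Ici.1 hx; positivity
  have hy' : 0 < τ1 * y + τ2 := by have := mem_Ici.1 hy; positivity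
  dsimp only
  rw [div_le_div_iff₀ hx' hy']
  nlinarith

theorem StrictConcaveOn.mul_add_mul_lt_add_mul_midpoint {s : Set ℝ} {g : ℝ → ℝ}
    (hg : StrictConcaveOn ℝ s g) (hmono : MonotoneOn g s) {a b wa wb : ℝ} (ha : a ∈ s)
    (hb : b ∈ s) (hab : a < b) (hwb : 0 < wb) (hw : wb ≤ wa) :
    wa * g a + wb * g b < (wa + wb) * g ((a + b) / 2) := by
  have hmid_eq : (1 / 2 : ℝ) • a + (1 / 2 : ℝ) • b = (a + b) / 2 := by simp only [smul_eq_mul]; ring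
  have hmid_mem : (a + b) / 2 ∈ s := hmid_eq ▸ hg.1 ha hb (by norm_num) (by norm_num) (by norm_num)
  have hconc : (1 / 2 : ℝ) • g a + (1 / 2 : ℝ) • g b < g ((a + b) / 2) :=
    hmid_eq ▸ hg.2 ha hb hab.ne (by norm_num) (by norm_num) (by norm_num)
  have hmono_a : g a ≤ g ((a + b) / 2) := hmono ha hmid_mem (by linarith)
  simp only [smul_eq_mul] at hconc
  -- split `wa` as `wb + (wa - wb)`: strict concavity handles the `wb` part, monotonicity the rest
  nlinarith [mul_lt_mul_of_pos_left hconc hwb, mul_le_mul_of_nonneg_left hmono_a (sub_nonneg.2 hw)]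

def feasiblePlacements {ι : Type*} [Fintype ι] (Ψ : ι → ℝ) (C : ℝ) : Set (ι → ℝ) :=
  {p | (∀ i, 0 ≤ p i ∧ p i ≤ Ψ i) ∧ ∑ i, p i ≤ C}

theorem le_of_isMaxOn_sum_mul_strictConcaveOn {ι : Type*} [Fintype ι] {g : ℝ → ℝ}
    (hg : StrictConcaveOn ℝ (Ici 0) g) (hmono : MonotoneOn g (Ici 0)) {q Ψ p : ι → ℝ} {C : ℝ}
    (hp : p ∈ feasiblePlacements Ψ C)
    (hmax : IsMaxOn (fun p => ∑ i, q i * g (p i)) (feasiblePlacements Ψ C) p)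
    {i j : ι} (hqj : 0 < q j) (hq : q j ≤ q i) (hΨ : Ψ j ≤ Ψ i) : p j ≤ p i := by
  classical
  by_contra! hlt
  have hne : i ≠ j := by rintro rfl; exact hlt.false
  obtain ⟨hbounds, hsum⟩ := hp
  set m := (p i + p j) / 2 with hm
  have hm_nonneg : 0 ≤ m := by linarith [hbounds i, hbounds j]
  have hm_le_j : m ≤ Ψ j := by linarith [hbounds j]
  have hp' : update (update p i m) j m ∈ feasiblePlacements Ψ C := by
    refine ⟨fun k => ?_, ?_⟩
    · rcases eq_or_ne k j with rfl | hkj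
      · simp [hm_nonneg, hm_le_j]
      rcases eq_or_ne k i with rfl | hki
      · simp [hkj, hm_nonneg, hm_le_j.trans hΨ]
      · simpa [hkj, hki] using hbounds k
    · have h := Fintype.sum_apply_update_update (fun _ x => x) p hne m m
      linarith
  have hle := isMaxOn_iff.1 hmax _ hp'
  simp only [Fintype.sum_apply_update_update (fun k x => q k * g x) p hne] at hle
  have hlt' := hg.mul_add_mul_lt_add_mul_midpoint hmono (hbounds i).1 (hbounds j).1 hlt hqj hq
  linarith

theorem optimal_placement_popularity_order_general (F : ℕ) (q Ψ : Fin F → ℝ) (τ1 τ2 C : ℝ)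
    (pstar : Fin F → ℝ)
    (hq : ∀ i, 0 < q i) (hqmono : ∀ i j : Fin F, i ≤ j → q j ≤ q i)
    (hτ1 : 0 < τ1) (hτ2 : 0 < τ2)
    (hΨconst : ∀ i j : Fin F, Ψ i = Ψ j)
    (hfeas : (∀ i, 0 ≤ pstar i ∧ pstar i ≤ Ψ i) ∧ ∑ i, pstar i ≤ C)
    (hopt : ∀ p : Fin F → ℝ, (∀ i, 0 ≤ p i ∧ p i ≤ Ψ i) → (∑ i, p i ≤ C) →
      ∑ i, q i * p i / (τ1 * p i + τ2) ≤ ∑ i, q i * pstar i / (τ1 * pstar i + τ2)) :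
    ∀ i j : Fin F, i ≤ j → pstar j ≤ pstar i := by
  have hmax : IsMaxOn (fun p => ∑ i, q i * (p i / (τ1 * p i + τ2)))
      (feasiblePlacements Ψ C) pstar :=
    isMaxOn_iff.2 fun p hp => by simpa only [mul_div_assoc] using hopt p hp.1 hp.2
  intro i j hij
  exact le_of_isMaxOn_sum_mul_strictConcaveOn (strictConcaveOn_div_linear hτ1 hτ2)
    (monotoneOn_div_linear hτ1.le hτ2) hfeas hmax (hq j) (hqmono i j hij) (hΨconst j i).le

theorem optimal_placement_popularity_order (F : ℕ) (q Ψ : Fin F → ℝ) (τ1 τ2 C : ℝ)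
    (pstar : Fin F → ℝ)
    (hq : ∀ i, 0 < q i) (hqmono : ∀ i j : Fin F, i ≤ j → q j ≤ q i)
    (hτ1 : 0 < τ1) (hτ2 : 0 < τ2)
    (hΨ : ∀ i, Ψ i ∈ Set.Ioc (0 : ℝ) 1) (hΨconst : ∀ i j : Fin F, Ψ i = Ψ j)
    (hfeas : (∀ i, 0 ≤ pstar i ∧ pstar i ≤ Ψ i) ∧ ∑ i, pstar i ≤ C)
    (hopt : ∀ p : Fin F → ℝ, (∀ i, 0 ≤ p i ∧ p i ≤ Ψ i) → (∑ i, p i ≤ C) →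
      ∑ i, q i * p i / (τ1 * p i + τ2) ≤ ∑ i, q i * pstar i / (τ1 * pstar i + τ2)) :
    ∀ i j : Fin F, i ≤ j → pstar j ≤ pstar i :=
  optimal_placement_popularity_order_general F q Ψ τ1 τ2 C pstar hq hqmono hτ1 hτ2 hΨconst hfeas
    hopt
end
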